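/- Let ω ∈ \hat{𝒟}. Then there exists r = r(ω) ∈ (0,1) such that |B^ω_a(z)| ≍ B^ω_a(a) uniformly for all a ∈ 𝔻 and all z in the pseudohyperbolic disc Δ(a,r) = {z : |(a-z)/(1-\bar{a}z)| < r}; i.e., there are constants c,C>0 with c·B^ω_a(a) ≤ |B^ω_a(z)| ≤ C·B^ω_a(a) for all such a,z. -/

import Mathlib

/-!
Write `B^ω_a(z) = ∑ B_n (ā z)^n` with `B_n = 1 / (2 ω_{2n+1})`. Splitting `ω_n = ∫_0^1 r^n ω` at
the point `1 - k/(n+1)` and iterating the doubling condition on `ω̂` shows that `ω_n` is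
comparable to `ω̂(1 - k/(n+1))`; hence `ω_p ≲ ω_q` whenever `q ≤ 2p + 2`. So the coefficients
`B_n` are positive, increasing and satisfy `B_n ≲ B_j` for `n ≤ 2j + 1`.

For such coefficients `(n+1) B_{n+1} ≲ ∑_{j ≤ n} B_j`, so the power series `F(w) = ∑ B_n w^n`
satisfies `|F'| ≲ F(ρ)/(1 - ρ)` on the disc of radius `ρ`. For `0 ≤ w₀ < 1`, `ρ = w₀ + ε (1 - w₀)`
and `|w - w₀| ≤ ε (1 - w₀)` the mean value inequality gives `|F(w) - F(w₀)| ≤ F(ρ)/4`; taking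
`w = ρ` first shows `F(ρ) ≤ 4/3 F(w₀)`, hence `|F(w) - F(w₀)| ≤ F(w₀)/2`. Finally, if `ϱ(a, z)` is
small then `w = ā z` lies in this disc around `w₀ = |a|²`, and `F(|a|²) = B^ω_a(a)`.
-/

open MeasureTheory Set

/-- The `n`-th moment `ω_n = ∫_0^1 r^n ω(r) dr` of a radial weight. -/
noncomputable def mom (ω : ℝ → ℝ) (n : ℕ) : ℝ := ∫ r in Set.Ioc (0:ℝ) 1, r ^ n * ω r

/-- The Bergman reproducing kernel of `A²_ω`: `B^ω_a(z) = ∑ (z a̅)^n / (2 ω_{2n+1})`. -/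
noncomputable def ker (ω : ℝ → ℝ) (a z : ℂ) : ℂ :=
  ∑' n : ℕ, ((starRingEnd ℂ) a * z) ^ n / (2 * (mom ω (2 * n + 1) : ℂ))

open Real

namespace RadialWeight

variable {ω : ℝ → ℝ}

-- `ω̂(s)` in the paper.
noncomputable def tail (ω : ℝ → ℝ) (s : ℝ) : ℝ := ∫ t in Ioc s 1, ω t

lemma ae_nonneg_restrict_Ioc (hnn : ∀ r ∈ Ico (0:ℝ) 1, 0 ≤ ω r) {u v : ℝ} (hu : 0 ≤ u)
    (hv : v ≤ 1) : 0 ≤ᵐ[volume.restrict (Ioc u v)] ω := by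
  rw [← Measure.restrict_congr_set Ioo_ae_eq_Ioc]
  filter_upwards [ae_restrict_mem measurableSet_Ioo] with t ht
  exact hnn t ⟨hu.trans ht.1.le, ht.2.trans_le hv⟩

lemma ae_pow_mul_nonneg (hnn : ∀ r ∈ Ico (0:ℝ) 1, 0 ≤ ω r) {u v : ℝ} (hu : 0 ≤ u) (hv : v ≤ 1)
    (n : ℕ) : 0 ≤ᵐ[volume.restrict (Ioc u v)] fun t => t ^ n * ω t := by
  filter_upwards [ae_nonneg_restrict_Ioc hnn hu hv, ae_restrict_mem measurableSet_Ioc]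
    with t hωt ht
  exact mul_nonneg (pow_nonneg (hu.trans ht.1.le) n) hωt

lemma integrableOn_pow_mul (hint : IntegrableOn ω (Ioc 0 1)) {u v : ℝ} (hu : 0 ≤ u) (hv : v ≤ 1)
    (n : ℕ) : IntegrableOn (fun t => t ^ n * ω t) (Ioc u v) := by
  refine (hint.mono_set (Ioc_subset_Ioc hu hv)).bdd_mul (c := 1)
    (continuous_pow n).aestronglyMeasurable ?_
  filter_upwards [ae_restrict_mem measurableSet_Ioc] with t ht
  rw [norm_pow, Real.norm_of_nonneg (hu.trans ht.1.le)]
  exact pow_le_one₀ (hu.trans ht.1.le) (ht.2.trans hv)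

lemma tail_nonneg (hnn : ∀ r ∈ Ico (0:ℝ) 1, 0 ≤ ω r) {s : ℝ} (hs : 0 ≤ s) : 0 ≤ tail ω s :=
  integral_nonneg_of_ae (ae_nonneg_restrict_Ioc hnn hs le_rfl)

lemma tail_anti (hnn : ∀ r ∈ Ico (0:ℝ) 1, 0 ≤ ω r) (hint : IntegrableOn ω (Ioc 0 1))
    {s s' : ℝ} (hs : 0 ≤ s) (h : s ≤ s') : tail ω s' ≤ tail ω s :=
  setIntegral_mono_set (hint.mono_set (Ioc_subset_Ioc hs le_rfl))
    (ae_nonneg_restrict_Ioc hnn hs le_rfl) (Ioc_subset_Ioc h le_rfl).eventuallyLE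

lemma setIntegral_pow_mul_le_tail (hnn : ∀ r ∈ Ico (0:ℝ) 1, 0 ≤ ω r)
    (hint : IntegrableOn ω (Ioc 0 1)) {s : ℝ} (hs : 0 ≤ s) (n : ℕ) :
    ∫ t in Ioc s 1, t ^ n * ω t ≤ tail ω s := by
  refine integral_mono_ae (integrableOn_pow_mul hint hs le_rfl n)
    (hint.mono_set (Ioc_subset_Ioc hs le_rfl)) ?_
  filter_upwards [ae_nonneg_restrict_Ioc hnn hs le_rfl, ae_restrict_mem measurableSet_Ioc]
    with t hωt ht
  exact mul_le_of_le_one_left hωt (pow_le_one₀ (hs.trans ht.1.le) ht.2)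

lemma pow_mul_tail_le_mom (hnn : ∀ r ∈ Ico (0:ℝ) 1, 0 ≤ ω r) (hint : IntegrableOn ω (Ioc 0 1))
    {s : ℝ} (hs₀ : 0 ≤ s) (n : ℕ) : s ^ n * tail ω s ≤ mom ω n := by
  calc s ^ n * tail ω s = ∫ t in Ioc s 1, s ^ n * ω t := (integral_const_mul _ _).symm
    _ ≤ ∫ t in Ioc s 1, t ^ n * ω t := by
      refine integral_mono_ae ((hint.mono_set (Ioc_subset_Ioc hs₀ le_rfl)).const_mul _)
        (integrableOn_pow_mul hint hs₀ le_rfl n) ?_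
      filter_upwards [ae_nonneg_restrict_Ioc hnn hs₀ le_rfl, ae_restrict_mem measurableSet_Ioc]
        with t hωt ht
      exact mul_le_mul_of_nonneg_right (pow_le_pow_left₀ hs₀ ht.1.le n) hωt
    _ ≤ mom ω n :=
      setIntegral_mono_set (integrableOn_pow_mul hint le_rfl le_rfl n)
        (ae_pow_mul_nonneg hnn le_rfl le_rfl n) (Ioc_subset_Ioc hs₀ le_rfl).eventuallyLE

lemma mom_le_pow_mul_mom_add_tail (hnn : ∀ r ∈ Ico (0:ℝ) 1, 0 ≤ ω r)
    (hint : IntegrableOn ω (Ioc 0 1)) {s : ℝ} (hs₀ : 0 ≤ s) (hs₁ : s ≤ 1) {m n : ℕ}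
    (hmn : m ≤ n) : mom ω n ≤ s ^ (n - m) * mom ω m + tail ω s := by
  have hsplit : mom ω n = (∫ t in Ioc 0 s, t ^ n * ω t) + ∫ t in Ioc s 1, t ^ n * ω t := by
    rw [mom, ← Ioc_union_Ioc_eq_Ioc hs₀ hs₁, setIntegral_union (Ioc_disjoint_Ioc_of_le le_rfl)
      measurableSet_Ioc (integrableOn_pow_mul hint le_rfl hs₁ n)
      (integrableOn_pow_mul hint hs₀ le_rfl n)]
  have hlow : ∫ t in Ioc 0 s, t ^ n * ω t ≤ s ^ (n - m) * mom ω m := by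
    calc ∫ t in Ioc 0 s, t ^ n * ω t ≤ ∫ t in Ioc 0 s, s ^ (n - m) * (t ^ m * ω t) := by
          refine integral_mono_ae (integrableOn_pow_mul hint le_rfl hs₁ n)
            ((integrableOn_pow_mul hint le_rfl hs₁ m).const_mul _) ?_
          filter_upwards [ae_nonneg_restrict_Ioc hnn le_rfl hs₁,
            ae_restrict_mem measurableSet_Ioc] with t hωt ht
          rw [← mul_assoc, ← Nat.sub_add_cancel hmn, pow_add, Nat.add_sub_cancel]
          gcongr
          exacts [pow_nonneg ht.1.le m, ht.1.le, ht.2]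
      _ = s ^ (n - m) * ∫ t in Ioc 0 s, t ^ m * ω t := integral_const_mul _ _
      _ ≤ s ^ (n - m) * mom ω m :=
          mul_le_mul_of_nonneg_left (setIntegral_mono_set
            (integrableOn_pow_mul hint le_rfl le_rfl m) (ae_pow_mul_nonneg hnn le_rfl le_rfl m)
            (Ioc_subset_Ioc le_rfl hs₁).eventuallyLE) (pow_nonneg hs₀ _)
  rw [hsplit]
  linarith [setIntegral_pow_mul_le_tail hnn hint hs₀ n]

lemma mom_nonneg (hnn : ∀ r ∈ Ico (0:ℝ) 1, 0 ≤ ω r) (n : ℕ) : 0 ≤ mom ω n :=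
  integral_nonneg_of_ae (ae_pow_mul_nonneg hnn le_rfl le_rfl n)

lemma mom_antitone (hnn : ∀ r ∈ Ico (0:ℝ) 1, 0 ≤ ω r) (hint : IntegrableOn ω (Ioc 0 1)) :
    Antitone (mom ω) := by
  intro n n' h
  refine integral_mono_ae (integrableOn_pow_mul hint le_rfl le_rfl n')
    (integrableOn_pow_mul hint le_rfl le_rfl n) ?_
  filter_upwards [ae_nonneg_restrict_Ioc hnn le_rfl le_rfl, ae_restrict_mem measurableSet_Ioc]
    with t hωt ht
  exact mul_le_mul_of_nonneg_right (pow_le_pow_of_le_one ht.1.le ht.2 h) hωt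

lemma mom_pos (hnn : ∀ r ∈ Ico (0:ℝ) 1, 0 ≤ ω r) (hint : IntegrableOn ω (Ioc 0 1))
    (hpos : ∀ r ∈ Ico (0:ℝ) 1, 0 < tail ω r) (n : ℕ) : 0 < mom ω n :=
  (mul_pos (by positivity) (hpos (1 / 2) ⟨by norm_num, by norm_num⟩)).trans_le
    (pow_mul_tail_le_mom hnn hint (by norm_num) n)

-- The point at which `ω̂` is comparable to `ω_n`, kept inside `[1/2, 1)`.
noncomputable def momentRadius (k : ℝ) (n : ℕ) : ℝ := max (1 / 2) (1 - k / (n + 1))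

lemma half_le_momentRadius (k : ℝ) (n : ℕ) : 1 / 2 ≤ momentRadius k n := le_max_left _ _

lemma momentRadius_lt_one {k : ℝ} (hk : 0 < k) (n : ℕ) : momentRadius k n < 1 :=
  max_lt (by norm_num) (by linarith [show 0 < k / (n + 1) by positivity])

lemma momentRadius_le_half_add {k : ℝ} (hk : 0 ≤ k) (n : ℕ) :
    momentRadius k n ≤ (1 + momentRadius k (n / 2)) / 2 := by
  have hhalf := half_le_momentRadius k (n / 2)
  have hn : (n : ℝ) + 1 ≤ 2 * (((n / 2 : ℕ) : ℝ) + 1) := by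
    exact_mod_cast (by omega : n + 1 ≤ 2 * (n / 2 + 1))
  have hx : k / (2 * (((n / 2 : ℕ) : ℝ) + 1)) ≤ k / (n + 1) :=
    div_le_div_of_nonneg_left hk (by positivity) hn
  rw [div_mul_eq_div_div_swap] at hx
  have hτ : 1 - k / (((n / 2 : ℕ) : ℝ) + 1) ≤ momentRadius k (n / 2) := le_max_right _ _
  exact max_le (by linarith) (by linarith)

lemma exp_neg_le_momentRadius {k : ℝ} (hk : 0 ≤ k) (n : ℕ) :
    exp (-(2 * (k / (n + 1)))) ≤ momentRadius k n := by
  set x := k / (n + 1)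
  have hx : 0 ≤ x := by positivity
  rcases le_or_gt x (1 / 2) with hx₂ | hx₂
  · -- `exp (2x) ≥ 1 + 2x` and `(1 - x) (1 + 2x) ≥ 1` on `[0, 1/2]`
    have hinv : exp (-(2 * x)) * exp (2 * x) = 1 := by rw [← exp_add]; simp
    have hlin := add_one_le_exp (2 * x)
    have hpos := exp_pos (-(2 * x))
    refine le_trans ?_ (le_max_right _ _)
    nlinarith [mul_le_mul_of_nonneg_left hlin hpos.le]
  · calc exp (-(2 * x)) ≤ exp (-1) := exp_le_exp.2 (by linarith)
      _ ≤ momentRadius k n := exp_neg_one_lt_half.le.trans (half_le_momentRadius k n)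

lemma exp_neg_le_momentRadius_pow {k : ℝ} (hk : 0 ≤ k) {p q : ℕ} (hpq : q ≤ 2 * p + 2) :
    exp (-(4 * k)) ≤ momentRadius k p ^ q := by
  calc exp (-(4 * k)) ≤ exp (q * -(2 * (k / (p + 1)))) := by
        refine exp_le_exp.2 ?_
        have hq : (q : ℝ) ≤ 2 * (p + 1) := by exact_mod_cast (by omega : q ≤ 2 * (p + 1))
        have : (q : ℝ) * (k / (p + 1)) ≤ 2 * k := by
          rw [mul_div_assoc', div_le_iff₀ (by positivity)]
          nlinarith
        linarith
    _ = exp (-(2 * (k / (p + 1)))) ^ q := exp_nat_mul _ _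
    _ ≤ momentRadius k p ^ q := pow_le_pow_left₀ (exp_pos _).le (exp_neg_le_momentRadius hk p) q

lemma momentRadius_pow_le_exp {k : ℝ} (hk : 1 / 2 ≤ k) {n : ℕ} (hn : 2 * k < n + 1) :
    momentRadius k n ^ (n - n / 2) ≤ exp (-(k / 4)) := by
  set x := k / (n + 1)
  have hx : 0 ≤ x := by positivity
  have hx₂ : x < 1 / 2 := by rw [div_lt_iff₀ (by positivity)]; linarith
  have hτ : momentRadius k n = 1 - x := max_eq_right (by linarith)
  have hn₀ : 0 < n := by exact_mod_cast (by linarith : (0 : ℝ) < n)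
  have hquarter : ((n : ℝ) + 1) / 4 ≤ ((n - n / 2 : ℕ) : ℝ) := by
    rw [div_le_iff₀ (by norm_num)]
    exact_mod_cast (by omega : n + 1 ≤ (n - n / 2) * 4)
  have hkx : k / 4 = ((n : ℝ) + 1) / 4 * x := by simp only [x]; field_simp
  calc momentRadius k n ^ (n - n / 2) ≤ exp (-x) ^ (n - n / 2) := by
        rw [hτ]; exact pow_le_pow_left₀ (by linarith) (one_sub_le_exp_neg x) _
    _ = exp (((n - n / 2 : ℕ) : ℝ) * -x) := (exp_nat_mul _ _).symm
    _ ≤ exp (-(k / 4)) := exp_le_exp.2 (by nlinarith)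

lemma mom_le_tail_momentRadius (hnn : ∀ r ∈ Ico (0:ℝ) 1, 0 ≤ ω r)
    (hint : IntegrableOn ω (Ioc 0 1)) {C k : ℝ} (hC : 1 ≤ C)
    (hD : ∀ r ∈ Ico (0:ℝ) 1, tail ω r ≤ C * tail ω ((1 + r) / 2)) (hk : 1 / 2 ≤ k)
    (hkC : exp (-(k / 4)) * (2 * C ^ 2) ≤ 1) (n : ℕ) :
    mom ω n ≤ 2 * C * tail ω (momentRadius k n) := by
  induction n using Nat.strong_induction_on with
  | _ n ih =>
  have hk₀ : 0 < k := by linarith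
  have hτ₀ : 0 ≤ momentRadius k n := by linarith [half_le_momentRadius k n]
  have htail := tail_nonneg hnn hτ₀
  rcases lt_or_ge (2 * k) (n + 1) with hn | hn
  · -- Split `ω_n` at `τ = momentRadius k n`: the head is at most `τ ^ (n - n/2) ω_{n/2}`, and one
    -- doubling step turns the induction hypothesis for `ω_{n/2}` into a bound by `ω̂(τ)`.
    have hm : n / 2 < n := Nat.div_lt_self (by exact_mod_cast (by linarith : (0 : ℝ) < n))
      one_lt_two
    have hdoub : tail ω (momentRadius k (n / 2)) ≤ C * tail ω (momentRadius k n) :=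
      (hD _ ⟨by linarith [half_le_momentRadius k (n / 2)], momentRadius_lt_one hk₀ _⟩).trans
        (mul_le_mul_of_nonneg_left
          (tail_anti hnn hint hτ₀ (momentRadius_le_half_add hk₀.le n)) (by linarith))
    have hmom : mom ω (n / 2) ≤ 2 * C * (C * tail ω (momentRadius k n)) :=
      (ih _ hm).trans (mul_le_mul_of_nonneg_left hdoub (by linarith))
    calc mom ω n ≤ momentRadius k n ^ (n - n / 2) * mom ω (n / 2) + tail ω (momentRadius k n) :=
          mom_le_pow_mul_mom_add_tail hnn hint hτ₀ (momentRadius_lt_one hk₀ n).le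
            (Nat.div_le_self n 2)
      _ ≤ exp (-(k / 4)) * (2 * C * (C * tail ω (momentRadius k n)))
            + tail ω (momentRadius k n) := by
          gcongr
          exacts [mom_nonneg hnn _, momentRadius_pow_le_exp hk hn]
      _ = exp (-(k / 4)) * (2 * C ^ 2) * tail ω (momentRadius k n)
            + tail ω (momentRadius k n) := by ring
      _ ≤ 2 * C * tail ω (momentRadius k n) := by nlinarith
  · have hτ : momentRadius k n = 1 / 2 := by
      refine max_eq_left ?_
      have : 1 / 2 ≤ k / (n + 1) := by rw [le_div_iff₀ (by positivity)]; linarith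
      linarith
    calc mom ω n ≤ tail ω 0 := setIntegral_pow_mul_le_tail hnn hint le_rfl n
      _ ≤ C * tail ω (1 / 2) := by simpa using hD 0 ⟨le_rfl, one_pos⟩
      _ ≤ 2 * C * tail ω (momentRadius k n) := by rw [hτ] at htail ⊢; nlinarith

lemma mom_le_mul_mom (hnn : ∀ r ∈ Ico (0:ℝ) 1, 0 ≤ ω r) (hint : IntegrableOn ω (Ioc 0 1))
    {C k : ℝ} (hC : 1 ≤ C) (hD : ∀ r ∈ Ico (0:ℝ) 1, tail ω r ≤ C * tail ω ((1 + r) / 2))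
    (hk : 1 / 2 ≤ k) (hkC : exp (-(k / 4)) * (2 * C ^ 2) ≤ 1) {p q : ℕ} (hpq : q ≤ 2 * p + 2) :
    mom ω p ≤ 2 * C * exp (4 * k) * mom ω q := by
  set τ := momentRadius k p
  have hτ₀ : 0 ≤ τ := by linarith [half_le_momentRadius k p]
  have htail := tail_nonneg hnn hτ₀
  calc mom ω p ≤ 2 * C * tail ω τ := mom_le_tail_momentRadius hnn hint hC hD hk hkC p
    _ = 2 * C * exp (4 * k) * (exp (-(4 * k)) * tail ω τ) := by
        rw [exp_neg]; field_simp
    _ ≤ 2 * C * exp (4 * k) * (τ ^ q * tail ω τ) := by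
        gcongr
        exact exp_neg_le_momentRadius_pow (by linarith) hpq
    _ ≤ 2 * C * exp (4 * k) * mom ω q := by
        gcongr
        exact pow_mul_tail_le_mom hnn hint hτ₀ q

lemma exists_mom_le_mul_mom (hnn : ∀ r ∈ Ico (0:ℝ) 1, 0 ≤ ω r) (hint : IntegrableOn ω (Ioc 0 1))
    (hD : ∃ C : ℝ, 1 ≤ C ∧ ∀ r ∈ Ico (0:ℝ) 1, tail ω r ≤ C * tail ω ((1 + r) / 2)) :
    ∃ K, ∀ p q : ℕ, q ≤ 2 * p + 2 → mom ω p ≤ K * mom ω q := by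
  obtain ⟨C, hC, hD⟩ := hD
  have hC₂ : 2 ≤ 2 * C ^ 2 := by nlinarith
  have hlog : log 2 ≤ log (2 * C ^ 2) := log_le_log (by norm_num) hC₂
  -- `k = 4 log (2 C²)` makes `exp (-k/4) * 2 C² = 1`.
  refine ⟨_, fun p q => mom_le_mul_mom hnn hint hC hD (k := 4 * log (2 * C ^ 2)) ?_ ?_⟩
  · linarith [log_two_gt_d9]
  · rw [mul_div_cancel_left₀ _ (by norm_num : (4 : ℝ) ≠ 0), exp_neg,
      exp_log (by linarith), inv_mul_cancel₀ (by linarith)]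

end RadialWeight

lemma summable_succ_pow_mul_geometric (m : ℕ) {t : ℝ} (ht : |t| < 1) :
    Summable (fun n : ℕ => ((n : ℝ) + 1) ^ m * t ^ n) := by
  have hexpand : ∀ n : ℕ, ((n : ℝ) + 1) ^ m * t ^ n
      = ∑ j ∈ Finset.range (m + 1), (m.choose j : ℝ) * ((n : ℝ) ^ j * t ^ n) := by
    intro n
    rw [add_pow, Finset.sum_mul]
    refine Finset.sum_congr rfl fun j _ => ?_
    rw [one_pow, mul_one]
    ring
  have hs : ∀ j, Summable (fun n : ℕ => (m.choose j : ℝ) * ((n : ℝ) ^ j * t ^ n)) := fun j =>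
    (summable_pow_mul_geometric_of_norm_lt_one (R := ℝ) (r := t) j
      (by rwa [Real.norm_eq_abs])).mul_left _
  exact (summable_sum fun j _ => hs j).congr fun n => (hexpand n).symm

lemma norm_pow_sub_pow_le {𝕜 : Type*} [NormedField 𝕜] {x y : 𝕜} {ρ : ℝ} (hx : ‖x‖ ≤ ρ)
    (hy : ‖y‖ ≤ ρ) (n : ℕ) : ‖x ^ n - y ^ n‖ ≤ n * ρ ^ (n - 1) * ‖x - y‖ := by
  have hρ : 0 ≤ ρ := (norm_nonneg x).trans hx
  rw [← geom_sum₂_mul x y n, norm_mul]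
  refine mul_le_mul_of_nonneg_right ?_ (norm_nonneg _)
  calc ‖∑ i ∈ Finset.range n, x ^ i * y ^ (n - 1 - i)‖
      ≤ ∑ i ∈ Finset.range n, ‖x ^ i * y ^ (n - 1 - i)‖ := norm_sum_le _ _
    _ ≤ ∑ i ∈ Finset.range n, ρ ^ (n - 1) := by
        refine Finset.sum_le_sum fun i hi => ?_
        rw [norm_mul, norm_pow, norm_pow]
        calc ‖x‖ ^ i * ‖y‖ ^ (n - 1 - i) ≤ ρ ^ i * ρ ^ (n - 1 - i) := by gcongr
          _ = ρ ^ (n - 1) := by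
              rw [← pow_add]; congr 1; have := Finset.mem_range.mp hi; omega
    _ = n * ρ ^ (n - 1) := by rw [Finset.sum_const, Finset.card_range, nsmul_eq_mul]

structure IsDoublingSeq (B : ℕ → ℝ) (K : ℝ) : Prop where
  pos : ∀ n, 0 < B n
  mono : Monotone B
  le_mul : ∀ n j, n ≤ 2 * j + 1 → B n ≤ K * B j

noncomputable def coeffSeries (𝕜 : Type*) [RCLike 𝕜] (B : ℕ → ℝ) (w : 𝕜) : 𝕜 :=
  ∑' n, (B n : 𝕜) * w ^ n

lemma coeffSeries_real (B : ℕ → ℝ) (t : ℝ) : coeffSeries ℝ B t = ∑' n, B n * t ^ n := rfl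

lemma coeffSeries_ofReal {𝕜 : Type*} [RCLike 𝕜] (B : ℕ → ℝ) (t : ℝ) :
    coeffSeries 𝕜 B t = (coeffSeries ℝ B t : 𝕜) := by
  rw [coeffSeries_real, RCLike.ofReal_tsum]
  simp [coeffSeries]

namespace IsDoublingSeq

variable {B : ℕ → ℝ} {K : ℝ}

lemma one_le (hB : IsDoublingSeq B K) : 1 ≤ K :=
  (le_mul_iff_one_le_left (hB.pos 0)).1 (hB.le_mul 0 0 (by norm_num))

lemma le_mul_pow_log (hB : IsDoublingSeq B K) (n : ℕ) : B n ≤ B 0 * K ^ (Nat.log 2 n + 1) := by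
  induction n using Nat.strong_induction_on with
  | _ n ih =>
  have hK := hB.one_le
  rcases lt_or_ge n 2 with hn | hn
  · interval_cases n
    · simpa using le_mul_of_one_le_right (hB.pos 0).le hK
    · simpa [mul_comm] using hB.le_mul 1 0 (by norm_num)
  · have hlog : Nat.log 2 (n / 2) + 1 = Nat.log 2 n := by
      rw [Nat.log_div_base]
      have := Nat.log_pos (b := 2) (by norm_num) hn
      omega
    calc B n ≤ K * B (n / 2) := hB.le_mul n (n / 2) (by omega)
      _ ≤ K * (B 0 * K ^ (Nat.log 2 (n / 2) + 1)) :=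
          mul_le_mul_of_nonneg_left (ih _ (by omega)) (by linarith)
      _ = B 0 * K ^ (Nat.log 2 n + 1) := by rw [hlog, pow_succ]; ring

lemma exists_le_mul_succ_pow (hB : IsDoublingSeq B K) :
    ∃ A : ℝ, ∃ m : ℕ, ∀ n, B n ≤ A * ((n : ℝ) + 1) ^ m := by
  have hK := hB.one_le
  obtain ⟨m, hm⟩ := pow_unbounded_of_one_lt K (one_lt_two (α := ℝ))
  refine ⟨B 0 * K, m, fun n => ?_⟩
  have hlog : (2 : ℝ) ^ Nat.log 2 n ≤ n + 1 := by
    rcases n.eq_zero_or_pos with rfl | hn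
    · simp
    · exact_mod_cast (Nat.pow_log_le_self 2 hn.ne').trans (Nat.le_succ n)
  calc B n ≤ B 0 * K ^ (Nat.log 2 n + 1) := hB.le_mul_pow_log n
    _ = B 0 * K * K ^ Nat.log 2 n := by ring
    _ ≤ B 0 * K * ((2 : ℝ) ^ m) ^ Nat.log 2 n := by
        gcongr
        · exact mul_nonneg (hB.pos 0).le (by linarith)
    _ = B 0 * K * ((2 : ℝ) ^ Nat.log 2 n) ^ m := by rw [← pow_mul, ← pow_mul, mul_comm m]
    _ ≤ B 0 * K * ((n : ℝ) + 1) ^ m := by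
        gcongr
        exact mul_nonneg (hB.pos 0).le (by linarith)

lemma summable_mul_pow (hB : IsDoublingSeq B K) {t : ℝ} (ht₀ : 0 ≤ t) (ht₁ : t < 1) :
    Summable (fun n => B n * t ^ n) := by
  obtain ⟨A, m, hA⟩ := hB.exists_le_mul_succ_pow
  refine Summable.of_nonneg_of_le (fun n => mul_nonneg (hB.pos n).le (pow_nonneg ht₀ n))
    (fun n => ?_) ((summable_succ_pow_mul_geometric m (by rwa [abs_of_nonneg ht₀])).mul_left A)
  rw [← mul_assoc]
  exact mul_le_mul_of_nonneg_right (hA n) (pow_nonneg ht₀ n)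

lemma summable_ofReal_mul_pow {𝕜 : Type*} [RCLike 𝕜] (hB : IsDoublingSeq B K) {w : 𝕜}
    (hw : ‖w‖ < 1) : Summable (fun n => (B n : 𝕜) * w ^ n) :=
  Summable.of_norm_bounded (hB.summable_mul_pow (norm_nonneg w) hw) fun n => by
    rw [norm_mul, norm_pow, RCLike.norm_ofReal, abs_of_pos (hB.pos n)]

lemma coeffSeries_nonneg (hB : IsDoublingSeq B K) {t : ℝ} (ht : 0 ≤ t) : 0 ≤ coeffSeries ℝ B t :=
  tsum_nonneg fun n => mul_nonneg (hB.pos n).le (pow_nonneg ht n)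

lemma succ_mul_le_sum_range (hB : IsDoublingSeq B K) (n : ℕ) :
    ((n : ℝ) + 1) * B (n + 1) ≤ 2 * K * ∑ j ∈ Finset.range (n + 1), B j := by
  have hK := hB.one_le
  set j₀ := (n + 1) / 2
  have hcard : ((n : ℝ) + 1) ≤ 2 * (Finset.Ico j₀ (n + 1)).card := by
    rw [Nat.card_Ico]
    exact_mod_cast (by omega : n + 1 ≤ 2 * (n + 1 - j₀))
  have hsum : ((Finset.Ico j₀ (n + 1)).card : ℝ) * B j₀ ≤ ∑ j ∈ Finset.range (n + 1), B j := by
    rw [← nsmul_eq_mul, Finset.range_eq_Ico]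
    calc (Finset.Ico j₀ (n + 1)).card • B j₀ ≤ ∑ j ∈ Finset.Ico j₀ (n + 1), B j :=
          Finset.card_nsmul_le_sum _ _ _ fun j hj => hB.mono (Finset.mem_Ico.mp hj).1
      _ ≤ ∑ j ∈ Finset.Ico 0 (n + 1), B j :=
          Finset.sum_le_sum_of_subset_of_nonneg (Finset.Ico_subset_Ico_left (Nat.zero_le _))
            fun j _ _ => (hB.pos j).le
  calc ((n : ℝ) + 1) * B (n + 1) ≤ (2 * (Finset.Ico j₀ (n + 1)).card) * (K * B j₀) :=
        mul_le_mul hcard (hB.le_mul _ _ (by omega)) (hB.pos _).le (by positivity)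
    _ = 2 * K * ((Finset.Ico j₀ (n + 1)).card * B j₀) := by ring
    _ ≤ 2 * K * ∑ j ∈ Finset.range (n + 1), B j := by gcongr

lemma hasSum_sum_range_mul_pow (hB : IsDoublingSeq B K) {t : ℝ} (ht₀ : 0 ≤ t) (ht₁ : t < 1) :
    HasSum (fun n : ℕ => (∑ j ∈ Finset.range (n + 1), B j) * t ^ n)
      (coeffSeries ℝ B t * (1 - t)⁻¹) := by
  have hprod := hasSum_sum_range_mul_of_summable_norm (R := ℝ) (f := fun n => B n * t ^ n)
    (g := fun n => t ^ n) (hB.summable_mul_pow ht₀ ht₁).norm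
    (summable_geometric_of_lt_one ht₀ ht₁).norm
  rw [tsum_geometric_of_lt_one ht₀ ht₁] at hprod
  rw [coeffSeries_real]
  refine hprod.congr_fun fun n => ?_
  rw [Finset.sum_mul]
  refine Finset.sum_congr rfl fun j hj => ?_
  rw [mul_assoc, ← pow_add, Nat.add_sub_cancel' (Nat.lt_succ_iff.1 (Finset.mem_range.1 hj))]

lemma succ_mul_pow_le (hB : IsDoublingSeq B K) {t : ℝ} (ht₀ : 0 ≤ t) (n : ℕ) :
    ((n : ℝ) + 1) * B (n + 1) * t ^ n ≤ 2 * K * ((∑ j ∈ Finset.range (n + 1), B j) * t ^ n) := by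
  rw [← mul_assoc]
  exact mul_le_mul_of_nonneg_right (hB.succ_mul_le_sum_range n) (pow_nonneg ht₀ n)

lemma summable_succ_mul_pow (hB : IsDoublingSeq B K) {t : ℝ} (ht₀ : 0 ≤ t) (ht₁ : t < 1) :
    Summable (fun n : ℕ => ((n : ℝ) + 1) * B (n + 1) * t ^ n) :=
  Summable.of_nonneg_of_le (fun n => by have := hB.pos (n + 1); positivity)
    (hB.succ_mul_pow_le ht₀) ((hB.hasSum_sum_range_mul_pow ht₀ ht₁).summable.mul_left _)

lemma tsum_succ_mul_pow_le (hB : IsDoublingSeq B K) {t : ℝ} (ht₀ : 0 ≤ t) (ht₁ : t < 1) :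
    ∑' n : ℕ, ((n : ℝ) + 1) * B (n + 1) * t ^ n ≤ 2 * K * (coeffSeries ℝ B t * (1 - t)⁻¹) :=
  (Summable.tsum_le_tsum (hB.succ_mul_pow_le ht₀) (hB.summable_succ_mul_pow ht₀ ht₁)
    ((hB.hasSum_sum_range_mul_pow ht₀ ht₁).summable.mul_left _)).trans_eq
    (by rw [tsum_mul_left, (hB.hasSum_sum_range_mul_pow ht₀ ht₁).tsum_eq])

lemma norm_coeffSeries_sub_le {𝕜 : Type*} [RCLike 𝕜] (hB : IsDoublingSeq B K) {w w' : 𝕜}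
    {ρ : ℝ} (hw : ‖w‖ ≤ ρ) (hw' : ‖w'‖ ≤ ρ) (hρ : ρ < 1) :
    ‖coeffSeries 𝕜 B w - coeffSeries 𝕜 B w'‖
      ≤ ‖w - w'‖ * ∑' n : ℕ, ((n : ℝ) + 1) * B (n + 1) * ρ ^ n := by
  have hρ₀ : 0 ≤ ρ := (norm_nonneg w).trans hw
  set g : ℕ → ℝ := fun n => ‖w - w'‖ * (n * B n * ρ ^ (n - 1))
  have hg : HasSum g (‖w - w'‖ * ∑' n : ℕ, ((n : ℝ) + 1) * B (n + 1) * ρ ^ n) := by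
    rw [← hasSum_nat_add_iff' 1]
    simpa [g] using (hB.summable_succ_mul_pow hρ₀ hρ).hasSum.mul_left ‖w - w'‖
  have hterm : ∀ n, ‖(B n : 𝕜) * w ^ n - (B n : 𝕜) * w' ^ n‖ ≤ g n := fun n => by
    rw [← mul_sub, norm_mul, RCLike.norm_ofReal, abs_of_pos (hB.pos n)]
    calc B n * ‖w ^ n - w' ^ n‖ ≤ B n * (n * ρ ^ (n - 1) * ‖w - w'‖) :=
          mul_le_mul_of_nonneg_left (norm_pow_sub_pow_le hw hw' n) (hB.pos n).le
      _ = g n := by ring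
  rw [coeffSeries, coeffSeries, ← (hB.summable_ofReal_mul_pow (hw.trans_lt hρ)).tsum_sub
    (hB.summable_ofReal_mul_pow (hw'.trans_lt hρ))]
  exact tsum_of_norm_bounded hg hterm

lemma norm_coeffSeries_sub_le_quarter {𝕜 : Type*} [RCLike 𝕜] (hB : IsDoublingSeq B K) {w₀ : ℝ}
    (hw₀ : 0 ≤ w₀) (hw₁ : w₀ < 1) {w : 𝕜} (hw : ‖w - w₀‖ ≤ (1 - w₀) / (16 * K)) :
    ‖coeffSeries 𝕜 B w - coeffSeries 𝕜 B w₀‖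
      ≤ coeffSeries ℝ B (w₀ + (1 - w₀) / (16 * K)) / 4 := by
  have hK := hB.one_le
  set δ := (1 - w₀) / (16 * K)
  set ρ := w₀ + δ
  have hδ₀ : 0 ≤ δ := div_nonneg (by linarith) (by positivity)
  have hδ : δ ≤ (1 - w₀) / 16 := div_le_div_of_nonneg_left (by linarith) (by norm_num) (by linarith)
  have hρ₀ : 0 ≤ ρ := by positivity
  have hρ₁ : ρ < 1 := by linarith
  have hnorm₀ : ‖(w₀ : 𝕜)‖ = w₀ := by rw [RCLike.norm_ofReal, abs_of_nonneg hw₀]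
  have hwρ : ‖w‖ ≤ ρ := (norm_le_insert' w w₀).trans (by rw [hnorm₀]; linarith)
  have hinv : (1 - ρ)⁻¹ ≤ 2 * (1 - w₀)⁻¹ :=
    calc (1 - ρ)⁻¹ ≤ ((1 - w₀) / 2)⁻¹ := inv_anti₀ (by linarith) (by linarith)
      _ = 2 * (1 - w₀)⁻¹ := by rw [inv_div, div_eq_mul_inv]
  have hD : 0 ≤ ∑' n : ℕ, ((n : ℝ) + 1) * B (n + 1) * ρ ^ n :=
    tsum_nonneg fun n => by have := hB.pos (n + 1); positivity
  have hF := hB.coeffSeries_nonneg hρ₀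
  calc ‖coeffSeries 𝕜 B w - coeffSeries 𝕜 B w₀‖
      ≤ ‖w - w₀‖ * ∑' n : ℕ, ((n : ℝ) + 1) * B (n + 1) * ρ ^ n :=
        hB.norm_coeffSeries_sub_le hwρ (by rw [hnorm₀]; linarith) hρ₁
    _ ≤ δ * (2 * K * (coeffSeries ℝ B ρ * (1 - ρ)⁻¹)) :=
        mul_le_mul hw (hB.tsum_succ_mul_pow_le hρ₀ hρ₁) hD hδ₀
    _ ≤ δ * (2 * K * (coeffSeries ℝ B ρ * (2 * (1 - w₀)⁻¹))) := by gcongr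
    _ = coeffSeries ℝ B ρ / 4 := by
        have : 1 - w₀ ≠ 0 := by linarith
        simp only [δ]; field_simp; ring

lemma norm_coeffSeries_sub_le_half {𝕜 : Type*} [RCLike 𝕜] (hB : IsDoublingSeq B K) {w₀ : ℝ}
    (hw₀ : 0 ≤ w₀) (hw₁ : w₀ < 1) {w : 𝕜} (hw : ‖w - w₀‖ ≤ (1 - w₀) / (16 * K)) :
    ‖coeffSeries 𝕜 B w - coeffSeries 𝕜 B w₀‖ ≤ coeffSeries ℝ B w₀ / 2 := by
  have hK := hB.one_le
  set ρ := w₀ + (1 - w₀) / (16 * K)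
  have hρ := hB.norm_coeffSeries_sub_le_quarter hw₀ hw₁ (w := ρ) (by
    simp only [ρ, RCLike.ofReal_real_eq_id, id, add_sub_cancel_left, Real.norm_eq_abs]
    exact (abs_of_nonneg (div_nonneg (by linarith) (by positivity))).le)
  simp only [RCLike.ofReal_real_eq_id, id, Real.norm_eq_abs] at hρ
  have := le_abs_self (coeffSeries ℝ B ρ - coeffSeries ℝ B w₀)
  linarith [hB.norm_coeffSeries_sub_le_quarter hw₀ hw₁ hw, hB.coeffSeries_nonneg hw₀]

end IsDoublingSeq

lemma norm_conj_mul_sub_normSq_le {a z : ℂ} (ha : ‖a‖ < 1) (hz : ‖z‖ < 1) {r : ℝ} (hr : r ≤ 1 / 2)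
    (h : ‖(a - z) / (1 - starRingEnd ℂ a * z)‖ ≤ r) :
    ‖starRingEnd ℂ a * z - Complex.normSq a‖ ≤ 2 * r * (1 - Complex.normSq a) := by
  have hN : (Complex.normSq a : ℂ) = starRingEnd ℂ a * a := Complex.normSq_eq_conj_mul_self
  have hN₁ : Complex.normSq a ≤ 1 := by
    rw [Complex.normSq_eq_norm_sq]; nlinarith [norm_nonneg a]
  have hd : 0 < ‖1 - starRingEnd ℂ a * z‖ := by
    refine norm_pos_iff.2 (sub_ne_zero.2 fun h1 => ?_)
    have : ‖starRingEnd ℂ a * z‖ < 1 := by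
      rw [norm_mul, Complex.norm_conj]; nlinarith [norm_nonneg a, norm_nonneg z]
    rw [← h1, norm_one] at this
    exact lt_irrefl _ this
  have hr₀ : 0 ≤ r := (norm_nonneg _).trans h
  rw [norm_div, div_le_iff₀ hd] at h
  -- `1 - ā z = (1 - |a|²) + ā (a - z)`
  have hsplit : ‖1 - starRingEnd ℂ a * z‖ ≤ (1 - Complex.normSq a) + ‖a - z‖ := by
    calc ‖1 - starRingEnd ℂ a * z‖
        = ‖((1 - Complex.normSq a : ℝ) : ℂ) + starRingEnd ℂ a * (a - z)‖ := by
          push_cast; rw [hN]; ring_nf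
      _ ≤ (1 - Complex.normSq a) + ‖a - z‖ := by
          refine (norm_add_le _ _).trans (add_le_add ?_ ?_)
          · rw [Complex.norm_real, Real.norm_of_nonneg (by linarith)]
          · rw [norm_mul, Complex.norm_conj]
            exact mul_le_of_le_one_left (norm_nonneg _) ha.le
  have hw : ‖starRingEnd ℂ a * z - Complex.normSq a‖ ≤ ‖a - z‖ := by
    rw [hN, ← mul_sub, norm_mul, Complex.norm_conj, norm_sub_rev]
    exact mul_le_of_le_one_left (norm_nonneg _) ha.le
  nlinarith [mul_le_mul_of_nonneg_left hsplit hr₀,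
    mul_nonneg (norm_nonneg (a - z)) (by linarith : (0:ℝ) ≤ 1 / 2 - r)]

namespace RadialWeight

noncomputable def kerCoeff (ω : ℝ → ℝ) (n : ℕ) : ℝ := (2 * mom ω (2 * n + 1))⁻¹

lemma ker_eq_coeffSeries (ω : ℝ → ℝ) (a z : ℂ) :
    ker ω a z = coeffSeries ℂ (kerCoeff ω) (starRingEnd ℂ a * z) := by
  refine tsum_congr fun n => ?_
  change _ = ((kerCoeff ω n : ℝ) : ℂ) * _
  simp only [kerCoeff, Complex.ofReal_inv, Complex.ofReal_mul, Complex.ofReal_ofNat]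
  ring

lemma ker_self (ω : ℝ → ℝ) (a : ℂ) :
    ker ω a a = (coeffSeries ℝ (kerCoeff ω) (Complex.normSq a) : ℂ) := by
  rw [ker_eq_coeffSeries, ← Complex.normSq_eq_conj_mul_self]
  exact coeffSeries_ofReal _ _

lemma isDoublingSeq_kerCoeff (hnn : ∀ r ∈ Ico (0:ℝ) 1, 0 ≤ ω r) (hint : IntegrableOn ω (Ioc 0 1))
    (hpos : ∀ r ∈ Ico (0:ℝ) 1, 0 < tail ω r) {K : ℝ}
    (hK : ∀ p q : ℕ, q ≤ 2 * p + 2 → mom ω p ≤ K * mom ω q) : IsDoublingSeq (kerCoeff ω) K where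
  pos n := inv_pos.2 (mul_pos two_pos (mom_pos hnn hint hpos _))
  mono i j h := inv_anti₀ (mul_pos two_pos (mom_pos hnn hint hpos _))
    (mul_le_mul_of_nonneg_left (mom_antitone hnn hint (by omega)) zero_le_two)
  le_mul n j h := by
    have hn := mom_pos hnn hint hpos (2 * n + 1)
    have hj := mom_pos hnn hint hpos (2 * j + 1)
    have := hK (2 * j + 1) (2 * n + 1) (by omega)
    simp only [kerCoeff]
    rw [← div_eq_mul_inv, le_div_iff₀ (by positivity), inv_mul_le_iff₀ (by positivity)]
    linarith

end RadialWeight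

/-- For `ω ∈ 𝒟̂` there is `r ∈ (0,1)` with `|B^ω_a(z)| ≍ B^ω_a(a)` uniformly for
`a ∈ 𝔻` and `z` in the pseudohyperbolic disc `Δ(a,r)`. -/
theorem stmt_11 (ω : ℝ → ℝ)
    (hnn : ∀ r ∈ Set.Ico (0:ℝ) 1, 0 ≤ ω r)
    (hint : MeasureTheory.IntegrableOn ω (Set.Ioc (0:ℝ) 1))
    (hpos : ∀ r ∈ Set.Ico (0:ℝ) 1, 0 < ∫ s in Set.Ioc r 1, ω s)
    (hD : ∃ C : ℝ, 1 ≤ C ∧ ∀ r ∈ Set.Ico (0:ℝ) 1,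
      (∫ s in Set.Ioc r 1, ω s) ≤ C * ∫ s in Set.Ioc ((1 + r) / 2) 1, ω s) :
    ∃ r : ℝ, 0 < r ∧ r < 1 ∧ ∃ c > (0:ℝ), ∃ C > (0:ℝ),
      ∀ a z : ℂ, ‖a‖ < 1 → ‖z‖ < 1 →
        ‖(a - z) / (1 - (starRingEnd ℂ) a * z)‖ < r →
          c * (ker ω a a).re ≤ ‖ker ω a z‖ ∧
            ‖ker ω a z‖ ≤ C * (ker ω a a).re := by
  obtain ⟨K, hK⟩ := RadialWeight.exists_mom_le_mul_mom hnn hint hD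
  have hB := RadialWeight.isDoublingSeq_kerCoeff hnn hint hpos hK
  have hK₁ := hB.one_le
  have hr : 1 / (32 * K) ≤ 1 / 2 := by gcongr; linarith
  refine ⟨1 / (32 * K), by positivity, by linarith, 1 / 2, by norm_num, 3 / 2, by norm_num,
    fun a z ha hz hρ => ?_⟩
  have hN₀ := Complex.normSq_nonneg a
  have hN₁ : Complex.normSq a < 1 := by
    rw [Complex.normSq_eq_norm_sq]; nlinarith [norm_nonneg a]
  have hw := norm_conj_mul_sub_normSq_le ha hz hr hρ.le
  rw [show 2 * (1 / (32 * K)) * (1 - Complex.normSq a) = (1 - Complex.normSq a) / (16 * K) by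
    field_simp; ring] at hw
  set F := coeffSeries ℝ (RadialWeight.kerCoeff ω) (Complex.normSq a)
  have hdiff : ‖ker ω a z - F‖ ≤ F / 2 := by
    have h := hB.norm_coeffSeries_sub_le_half hN₀ hN₁ hw
    rwa [coeffSeries_ofReal, ← RadialWeight.ker_eq_coeffSeries] at h
  have hF : ‖(F : ℂ)‖ = F := by
    rw [Complex.norm_real, Real.norm_of_nonneg (hB.coeffSeries_nonneg hN₀)]
  rw [RadialWeight.ker_self, Complex.ofReal_re]
  have h₁ := norm_sub_norm_le (F : ℂ) (ker ω a z)
  have h₂ := norm_le_insert' (ker ω a z) (F : ℂ)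
  rw [norm_sub_rev] at h₁
  constructor <;> linarith
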